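/- arXiv:1406.5370 — 7 statements merged into one kernel-verified Lean document; each statement's English description precedes it below -/
import Mathlib

section
/- Let C be the identity-ranking comparison matrix and Ĉ the matrix obtained by flipping the sign of the single comparison (i,j) with i < j. Let S and Ŝ be the corresponding similarity matrices S = (n𝟙𝟙ᵀ + CCᵀ)/2. Then Ŝ_{i,j} = S_{i,j}, Ŝ_{s,t} = S_{s,t} for all pairs with {s,t} ∩ {i,j} = ∅, and for t ∉ {i,j}: Ŝ_{i,t} = S_{i,t} - 1 if t < j, Ŝ_{i,t} = S_{i,t} + 1 if t > j; Ŝ_{j,t} = S_{j,t} + 1 if t < i, Ŝ_{j,t} = S_{j,t} - 1 if t > i. -/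
/-! Flipping the comparison `(i, j)` changes exactly one entry in each of the rows `i` and `j`
of `C`, so `Ŝ s t = (n + Ĉ s ⬝ᵥ Ĉ t) / 2` moves by half the change of a dot product in one or
two coordinates. For `t ∉ {i, j}` this gives `Ŝ i t = S i t + C t j` and `Ŝ j t = S j t - C t i`,
i.e. `±1` according to how `t` compares with `j` (resp. `i`); for the pair `(i, j)` itself the
two contributions cancel because `C` is antisymmetric off the diagonal. -/

open Matrix

section
variable {ι R : Type*} [Fintype ι] [CommRing R]

theorem dotProduct_eq_add_of_eq_of_ne {u u' : ι → R} {a : ι} (hu : ∀ k, k ≠ a → u' k = u k)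
    (v : ι → R) : u' ⬝ᵥ v = u ⬝ᵥ v + (u' a - u a) * v a := by
  classical
  have hsplit : u' = u + Pi.single a (u' a - u a) := by
    ext k
    rcases eq_or_ne k a with rfl | hk
    · simp
    · simp [hu k hk, hk]
  rw [hsplit, add_dotProduct, single_dotProduct]
  simp

theorem dotProduct_eq_add_of_eq_of_ne₂ {u u' v v' : ι → R} {a b : ι} (hab : a ≠ b)
    (hu : ∀ k, k ≠ a → u' k = u k) (hv : ∀ k, k ≠ b → v' k = v k) :
    u' ⬝ᵥ v' = u ⬝ᵥ v + (u' a - u a) * v a + u b * (v' b - v b) := by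
  rw [dotProduct_eq_add_of_eq_of_ne hu, dotProduct_comm u, dotProduct_eq_add_of_eq_of_ne hv,
    dotProduct_comm v, hv a hab]
  ring

end

/-- Effect of one flipped comparison `(i, j)` (with `i < j`) on the
similarity matrix `S = (n 𝟙𝟙ᵀ + C Cᵀ)/2`. -/
theorem one_corruption_similarity (n : ℕ) (C Chat : Fin n → Fin n → ℝ)
    (i j : Fin n) (hij : i < j)
    (hC : ∀ s t : Fin n, C s t = if t ≤ s then 1 else -1)
    (hChat_flip₁ : Chat i j = -C i j) (hChat_flip₂ : Chat j i = -C j i)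
    (hChat : ∀ s t : Fin n, ¬((s = i ∧ t = j) ∨ (s = j ∧ t = i)) → Chat s t = C s t)
    (S Shat : Fin n → Fin n → ℝ)
    (hS : ∀ s t : Fin n, S s t = ((n : ℝ) + ∑ k : Fin n, C s k * C t k) / 2)
    (hShat : ∀ s t : Fin n, Shat s t = ((n : ℝ) + ∑ k : Fin n, Chat s k * Chat t k) / 2) :
    Shat i j = S i j ∧
    (∀ s t : Fin n, s ≠ i → s ≠ j → t ≠ i → t ≠ j → Shat s t = S s t) ∧
    (∀ t : Fin n, t ≠ i → t ≠ j →
      (t < j → Shat i t = S i t - 1) ∧ (j < t → Shat i t = S i t + 1) ∧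
      (t < i → Shat j t = S j t + 1) ∧ (i < t → Shat j t = S j t - 1)) := by
  have hS' : ∀ s t, S s t = (n + C s ⬝ᵥ C t) / 2 := hS
  have hShat' : ∀ s t, Shat s t = (n + Chat s ⬝ᵥ Chat t) / 2 := hShat
  have hC_le {s t : Fin n} (h : t ≤ s) : C s t = 1 := by simp [hC, h]
  have hC_lt {s t : Fin n} (h : s < t) : C s t = -1 := by simp [hC, not_le.mpr h]
  have hrow_i : ∀ k, k ≠ j → Chat i k = C i k := fun k hk => hChat i k (by grind)
  have hrow_j : ∀ k, k ≠ i → Chat j k = C j k := fun k hk => hChat j k (by grind)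
  have hrow {s : Fin n} (hsi : s ≠ i) (hsj : s ≠ j) : Chat s = C s :=
    funext fun k => hChat s k (by grind)
  have hi (t) (hti : t ≠ i) (htj : t ≠ j) : Shat i t = S i t + C t j := by
    rw [hShat', hS', hrow hti htj, dotProduct_eq_add_of_eq_of_ne hrow_i, hChat_flip₁, hC_lt hij]
    ring
  have hj (t) (hti : t ≠ i) (htj : t ≠ j) : Shat j t = S j t - C t i := by
    rw [hShat', hS', hrow hti htj, dotProduct_eq_add_of_eq_of_ne hrow_j, hChat_flip₂,
      hC_le hij.le]
    ring
  refine ⟨?_, fun s t hsi hsj hti htj => by rw [hShat', hS', hrow hsi hsj, hrow hti htj], ?_⟩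
  · rw [hShat', hS', dotProduct_eq_add_of_eq_of_ne₂ hij.ne' hrow_i hrow_j, hChat_flip₁,
      hChat_flip₂, hC_lt hij, hC_le hij.le, hC_le le_rfl, hC_le le_rfl]
    ring
  · intro t hti htj
    refine ⟨fun h => ?_, fun h => ?_, fun h => ?_, fun h => ?_⟩
    · rw [hi t hti htj, hC_lt h]; ring
    · rw [hi t hti htj, hC_le h.le]
    · rw [hj t hti htj, hC_lt h]; ring
    · rw [hj t hti htj, hC_le h.le]
end

section
/- Let C be the identity-ranking comparison matrix of size n and C̃ the matrix obtained by setting one comparison (i,j) to 0 (missing), with j - i > 1. Then the similarity matrix S̃ = (n𝟙𝟙ᵀ + C̃C̃ᵀ)/2 satisfies strict Robinson inequalities (entries strictly decrease away from the diagonal), and the point score vector w̃_k = Σ_l C̃_{l,k} is strictly monotonic. -/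
/-!
Away from the missing pair, `C̃` is the comparison matrix `C` of the identity ranking, for which
`∑ₖ C s k * C t k = n - 2 (s - t)` when `t ≤ s` and `∑ₗ C l k = n - 2 k`: the similarity
`n - (s - t)` drops by exactly `1` per step away from the diagonal and the point score by `2` per
rank. Deleting the pair `(i, j)` only changes the terms `k = i, j` of these sums, which moves each
similarity by at most `1/2` and the point scores by `+1` at `j` and `-1` at `i`. A step can then
only be cancelled if one of its ends moves up and the other down, which happens only for adjacent
`i` and `j`.
-/

open Finset

theorem Fintype.sum_eq_sum_add_of_eq_off_pair {α R : Type*} [Fintype α] [AddCommGroup R]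
    {f g : α → R} {a b : α} (hab : a ≠ b) (h : ∀ x, x ≠ a ∧ x ≠ b → f x = g x) :
    ∑ x, f x = ∑ x, g x + (f a - g a) + (f b - g b) := by
  have hdiff : ∑ x, (f x - g x) = (f a - g a) + (f b - g b) :=
    Fintype.sum_eq_add a b hab fun x hx => sub_eq_zero.2 (h x hx)
  rw [Finset.sum_sub_distrib] at hdiff
  rw [add_assoc, ← hdiff, add_sub_cancel]

theorem Fintype.sum_ite_mem_neg_one_one {α R : Type*} [Fintype α] [DecidableEq α] [Ring R]
    (S : Finset α) : ∑ x, (if x ∈ S then -1 else 1 : R) = Fintype.card α - 2 * #S := by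
  have h : ∀ x, (if x ∈ S then -1 else 1 : R) = 1 - 2 * if x ∈ S then 1 else 0 := by
    intro x
    split_ifs <;> norm_num
  simp only [h, Finset.sum_sub_distrib, ← Finset.mul_sum, Finset.sum_boole]
  simp

def identityComparison (n : ℕ) (s t : Fin n) : ℝ := if t ≤ s then 1 else -1

def withMissingPair {n : ℕ} (i j : Fin n) (C : Fin n → Fin n → ℝ) (s t : Fin n) : ℝ :=
  if (s = i ∧ t = j) ∨ (s = j ∧ t = i) then 0 else C s t

noncomputable def similarity {n : ℕ} (C : Fin n → Fin n → ℝ) (s t : Fin n) : ℝ :=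
  ((n : ℝ) + ∑ k, C s k * C t k) / 2

def pointScore {n : ℕ} (C : Fin n → Fin n → ℝ) (k : Fin n) : ℝ := ∑ l, C l k

theorem similarity_comm {n : ℕ} (C : Fin n → Fin n → ℝ) (s t : Fin n) :
    similarity C s t = similarity C t s := by
  simp only [similarity, mul_comm (C s _)]

namespace identityComparison

variable {n : ℕ}

theorem mul_eq {s t : Fin n} (h : t ≤ s) (k : Fin n) :
    identityComparison n s k * identityComparison n t k = if t < k ∧ k ≤ s then -1 else 1 := by
  simp only [identityComparison, Fin.le_def, Fin.lt_def] at h ⊢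
  split_ifs <;> first | omega | norm_num

theorem sum_mul {s t : Fin n} (h : t ≤ s) :
    ∑ k, identityComparison n s k * identityComparison n t k = n - 2 * (s : ℕ) + 2 * (t : ℕ) := by
  simp only [mul_eq h, ← Finset.mem_Ioc]
  rw [Fintype.sum_ite_mem_neg_one_one, Fin.card_Ioc, Fintype.card_fin, Nat.cast_sub h]
  ring

theorem sum_col (m : Fin n) : ∑ l, identityComparison n l m = n - 2 * (m : ℕ) := by
  have h : ∀ l, identityComparison n l m = if l ∈ Iio m then -1 else 1 := by
    intro l
    simp only [identityComparison, Finset.mem_Iio, not_le.symm]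
    split_ifs <;> rfl
  rw [Finset.sum_congr rfl fun l _ => h l, Fintype.sum_ite_mem_neg_one_one, Fin.card_Iio,
    Fintype.card_fin]

end identityComparison

section withMissingPair

variable {n : ℕ} {i j : Fin n} {C : Fin n → Fin n → ℝ}

theorem eq_withMissingPair {M : Fin n → Fin n → ℝ} (hij : M i j = 0) (hji : M j i = 0)
    (h : ∀ s t, ¬((s = i ∧ t = j) ∨ (s = j ∧ t = i)) → M s t = C s t) :
    M = withMissingPair i j C := by
  ext s t
  unfold withMissingPair
  split_ifs with hst
  · rcases hst with ⟨rfl, rfl⟩ | ⟨rfl, rfl⟩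
    exacts [hij, hji]
  · exact h s t hst

theorem withMissingPair_comm : withMissingPair i j C = withMissingPair j i C := by
  ext s t
  simp only [withMissingPair, or_comm]

theorem withMissingPair_apply_col (s : Fin n) :
    withMissingPair i j C s i = if s = j then 0 else C s i := by
  unfold withMissingPair
  split_ifs <;> simp_all

theorem withMissingPair_apply_row (t : Fin n) :
    withMissingPair i j C i t = if t = j then 0 else C i t := by
  unfold withMissingPair
  split_ifs <;> simp_all

theorem mul_withMissingPair_col_sub (s t : Fin n) :
    withMissingPair i j C s i * withMissingPair i j C t i - C s i * C t i =
      if s = j ∨ t = j then -(C s i * C t i) else 0 := by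
  simp only [withMissingPair_apply_col]
  split_ifs <;> simp_all

theorem sum_mul_withMissingPair (hij : i ≠ j) (s t : Fin n) :
    ∑ k, withMissingPair i j C s k * withMissingPair i j C t k =
      ∑ k, C s k * C t k + (if s = j ∨ t = j then -(C s i * C t i) else 0)
        + (if s = i ∨ t = i then -(C s j * C t j) else 0) := by
  rw [Fintype.sum_eq_sum_add_of_eq_off_pair (g := fun k => C s k * C t k) hij fun k hk => by
    simp [withMissingPair, hk.1, hk.2], mul_withMissingPair_col_sub, withMissingPair_comm,
    mul_withMissingPair_col_sub]

theorem pointScore_withMissingPair (hij : i ≠ j) (m : Fin n) :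
    pointScore (withMissingPair i j C) m =
      pointScore C m + (if m = j then -C i j else 0) + (if m = i then -C j i else 0) := by
  rw [pointScore, Fintype.sum_eq_sum_add_of_eq_off_pair (g := fun l => C l m) hij fun l hl => by
    simp [withMissingPair, hl.1, hl.2], withMissingPair_apply_row, withMissingPair_comm,
    withMissingPair_apply_row, pointScore]
  split_ifs <;> simp_all

end withMissingPair

namespace identityComparison

variable {n : ℕ} {i j : Fin n}

theorem similarity_withMissingPair (hij : i ≠ j) {s t : Fin n} (h : t ≤ s) :
    similarity (withMissingPair i j (identityComparison n)) s t =
      (n : ℝ) - (s : ℕ) + (t : ℕ)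
        + ((if s = j ∨ t = j then (if t < i ∧ i ≤ s then 1 else -1) else 0)
          + (if s = i ∨ t = i then (if t < j ∧ j ≤ s then 1 else -1) else 0)) / 2 := by
  rw [similarity, sum_mul_withMissingPair hij, sum_mul h, mul_eq h, mul_eq h]
  split_ifs <;> ring

theorem similarity_withMissingPair_lt_succ_right (hij : (i : ℕ) + 1 < j) {s t t' : Fin n}
    (hts : t < s) (ht' : (t' : ℕ) = t + 1) :
    similarity (withMissingPair i j (identityComparison n)) s t <
      similarity (withMissingPair i j (identityComparison n)) s t' := by
  have hne : i ≠ j := fun h => by simp [h] at hij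
  have h' : t' ≤ s := Fin.le_def.2 (by omega)
  rw [similarity_withMissingPair hne hts.le, similarity_withMissingPair hne h']
  simp only [Fin.ext_iff, Fin.le_def, Fin.lt_def] at *
  push_cast [ht']
  split_ifs <;> first | omega | linarith

theorem similarity_withMissingPair_succ_left_lt (hij : (i : ℕ) + 1 < j) {s s' t : Fin n}
    (hts : t < s) (hs' : (s' : ℕ) = s + 1) :
    similarity (withMissingPair i j (identityComparison n)) s' t <
      similarity (withMissingPair i j (identityComparison n)) s t := by
  have hne : i ≠ j := fun h => by simp [h] at hij
  have h' : t ≤ s' := Fin.le_def.2 (by omega)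
  rw [similarity_withMissingPair hne hts.le, similarity_withMissingPair hne h']
  simp only [Fin.ext_iff, Fin.le_def, Fin.lt_def] at *
  push_cast [hs']
  split_ifs <;> first | omega | linarith

theorem strictAnti_pointScore_withMissingPair (hij : (i : ℕ) + 1 < j) :
    StrictAnti (pointScore (withMissingPair i j (identityComparison n))) := by
  have hne : i ≠ j := fun h => by simp [h] at hij
  intro k l hkl
  have hkl' : ((k : ℕ) : ℝ) + 1 ≤ (l : ℕ) := by exact_mod_cast Fin.lt_def.1 hkl
  have hij' : ((i : ℕ) : ℝ) + 2 ≤ (j : ℕ) := by exact_mod_cast hij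
  rw [pointScore_withMissingPair hne, pointScore_withMissingPair hne, pointScore, pointScore,
    sum_col, sum_col]
  simp only [identityComparison, Fin.ext_iff, Fin.le_def, Fin.lt_def] at *
  split_ifs <;> first | omega | (rify at *; linarith)

end identityComparison

/-- If one comparison `(i, j)` with `j - i > 1` is missing (set to
`0`), the similarity matrix `S̃ = (n 𝟙𝟙ᵀ + C̃ C̃ᵀ)/2` satisfies strict Robinson
inequalities and the point score vector is strictly monotonic (decreasing). -/
theorem one_missing_similarity_strictR (n : ℕ) (C Ctil : Fin n → Fin n → ℝ)
    (i j : Fin n) (hij : (i : ℕ) + 1 < (j : ℕ))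
    (hC : ∀ s t : Fin n, C s t = if t ≤ s then 1 else -1)
    (hCtil_miss₁ : Ctil i j = 0) (hCtil_miss₂ : Ctil j i = 0)
    (hCtil : ∀ s t : Fin n, ¬((s = i ∧ t = j) ∨ (s = j ∧ t = i)) → Ctil s t = C s t)
    (Stil : Fin n → Fin n → ℝ)
    (hStil : ∀ s t : Fin n, Stil s t = ((n : ℝ) + ∑ k : Fin n, Ctil s k * Ctil t k) / 2)
    (wtil : Fin n → ℝ)
    (hwtil : ∀ k : Fin n, wtil k = ∑ l : Fin n, Ctil l k) :
    (∀ s t : Fin n, Stil s t = Stil t s) ∧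
    (∀ s t tp : Fin n, t < s → (tp : ℕ) = (t : ℕ) + 1 → Stil s t < Stil s tp) ∧
    (∀ s sp t : Fin n, t < s → (sp : ℕ) = (s : ℕ) + 1 → Stil sp t < Stil s t) ∧
    (∀ k l : Fin n, k < l → wtil l < wtil k) := by
  obtain rfl : C = identityComparison n := funext₂ hC
  obtain rfl : Ctil = withMissingPair i j (identityComparison n) :=
    eq_withMissingPair hCtil_miss₁ hCtil_miss₂ hCtil
  obtain rfl : Stil = similarity (withMissingPair i j (identityComparison n)) := funext₂ hStil
  obtain rfl : wtil = pointScore (withMissingPair i j (identityComparison n)) := funext hwtil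
  exact ⟨similarity_comm _,
    fun _ _ _ => identityComparison.similarity_withMissingPair_lt_succ_right hij,
    fun _ _ _ => identityComparison.similarity_withMissingPair_succ_left_lt hij,
    fun _ _ hkl => identityComparison.strictAnti_pointScore_withMissingPair hij hkl⟩
end

section
/- Let S be the n×n matrix S_{i,j} = n - |i-j|, D = diag(S𝟙) its degree matrix, and x the vector with x_i = i - (n+1)/2. Then S x = (1/3) D x; equivalently, x is an eigenvector of the normalized Laplacian L = I - D^{-1}S with eigenvalue 2/3. -/
/-!
Split the weight at `i`: for `k ≤ i` one has `n - |i - k| = (n + i - k) - 2 (i - k)`, and for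
`k > i` it is `n + i - k`. So every sum `∑ₖ (n - |i - k|) f k` is a full-range sum with the linear
weight `n + i - k` minus a sum over `k ≤ i` with the linear weight `i - k`. For `f = 1` and
`f k = k - (n - 1) / 2` all four resulting sums are sums of polynomials of degree at most two over
an initial segment of `ℕ`, and the claimed identity becomes a polynomial identity in `n` and `i`.
-/

open Finset

lemma sum_range_sub_cast (α : ℝ) (m : ℕ) :
    ∑ k ∈ range m, (α - k) = m * α - m * (m - 1) / 2 := by
  induction m with
  | zero => simp
  | succ m ih =>
    rw [sum_range_succ, ih]
    push_cast
    ring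

lemma sum_range_sub_cast_mul_cast_sub (α β : ℝ) (m : ℕ) :
    ∑ k ∈ range m, (α - k) * (k - β) =
      -(m * (m - 1) * (2 * m - 1) / 6) + (α + β) * (m * (m - 1) / 2) - m * α * β := by
  induction m with
  | zero => simp
  | succ m ih =>
    rw [sum_range_succ, ih]
    push_cast
    ring

lemma sum_range_sub_abs_mul {n i : ℕ} (hi : i < n) (f : ℕ → ℝ) :
    ∑ k ∈ range n, ((n : ℝ) - |(i : ℝ) - k|) * f k =
      ∑ k ∈ range n, ((n + i : ℝ) - k) * f k - 2 * ∑ k ∈ range (i + 1), ((i : ℝ) - k) * f k := by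
  have hi' : i + 1 ≤ n := hi
  have below : ∀ k ∈ range (i + 1),
      ((n : ℝ) - |(i : ℝ) - k|) * f k = ((n + i : ℝ) - k) * f k - 2 * (((i : ℝ) - k) * f k) := by
    intro k hk
    have : (k : ℝ) ≤ i := by exact_mod_cast Nat.lt_succ_iff.mp (mem_range.mp hk)
    rw [abs_of_nonneg (sub_nonneg.mpr this)]
    ring
  have above : ∀ k ∈ Ico (i + 1) n,
      ((n : ℝ) - |(i : ℝ) - k|) * f k = ((n + i : ℝ) - k) * f k := by
    intro k hk
    have : (i : ℝ) ≤ k := by exact_mod_cast (Nat.le_succ i).trans (mem_Ico.mp hk).1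
    rw [abs_of_nonpos (sub_nonpos.mpr this)]
    ring
  rw [← sum_range_add_sum_Ico _ hi', ← sum_range_add_sum_Ico _ hi', sum_congr rfl below,
    sum_congr rfl above, sum_sub_distrib, mul_sum]
  ring

lemma sum_range_sub_abs_mul_centered {n i : ℕ} (hi : i < n) :
    ∑ k ∈ range n, ((n : ℝ) - |(i : ℝ) - k|) * (k - (n - 1) / 2) =
      1 / 3 * ((∑ k ∈ range n, ((n : ℝ) - |(i : ℝ) - k|)) * (i - (n - 1) / 2)) := by
  have degree := sum_range_sub_abs_mul hi fun _ => 1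
  simp only [mul_one] at degree
  rw [sum_range_sub_abs_mul hi, degree, sum_range_sub_cast_mul_cast_sub,
    sum_range_sub_cast_mul_cast_sub, sum_range_sub_cast, sum_range_sub_cast]
  push_cast
  ring

/-- The linear vector `x i = i - (n+1)/2` (1-indexed) satisfies
`S x = (1/3) D x`, i.e. it is an eigenvector of the normalized Laplacian
`I - D⁻¹ S` with eigenvalue `2/3`. -/
theorem linear_vector_eigen (n : ℕ) (S : Fin n → Fin n → ℝ)
    (hS : ∀ i j : Fin n, S i j = (n : ℝ) - |(i : ℝ) - (j : ℝ)|)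
    (d : Fin n → ℝ) (hd : ∀ i : Fin n, d i = ∑ k : Fin n, S i k)
    (x : Fin n → ℝ) (hx : ∀ i : Fin n, x i = ((i : ℝ) + 1) - ((n : ℝ) + 1) / 2) :
    ∀ i : Fin n, ∑ k : Fin n, S i k * x k = (1 / 3) * (d i * x i) := by
  intro i
  have hx' : ∀ k : Fin n, x k = (k : ℝ) - (n - 1) / 2 := fun k => by rw [hx]; ring
  simp only [hS, hd, hx']
  rw [Fin.sum_univ_eq_sum_range (fun k => ((n : ℝ) - |(i : ℝ) - k|) * (k - (n - 1) / 2)),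
    Fin.sum_univ_eq_sum_range (fun k => (n : ℝ) - |(i : ℝ) - k|)]
  exact sum_range_sub_abs_mul_centered i.isLt
end

section
/- Let S be the n×n matrix S_{i,j} = n - |i-j| and L = diag(S𝟙) - S its unnormalized Laplacian. Let v ∈ ℝⁿ be the vector with v_1 = v_n = α, v_i = -β for 1 < i < n, where α, β > 0 are chosen so that vᵀ𝟙 = 0 and ‖v‖₂ = 1. Then L v = (n(n+1)/2) v. -/
/-!
Write `v = (α + β) e - β 𝟙`, where `e` is the indicator of the two endpoints. The Laplacian kills
constants, so only `L e` matters. The two endpoint columns of `S` are `n - i` and `i + 1`, which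
add up to the constant `n + 1`, and both endpoint rows of `S` sum to `n(n+1)/2`; hence
`L e = (n(n+1)/2) e - (n + 1) 𝟙`. The zero-sum condition `2α = (n - 2)β` is exactly what turns
`(α + β)(n + 1) 𝟙` into `(n(n+1)/2) β 𝟙`.
-/

open Matrix Finset

namespace Matrix

variable {ι R : Type*} [Fintype ι] [DecidableEq ι] [CommRing R]

def laplacian (A : Matrix ι ι R) : Matrix ι ι R := diagonal (A *ᵥ 1) - A

theorem laplacian_mulVec_apply (A : Matrix ι ι R) (v : ι → R) (i : ι) :
    (A.laplacian *ᵥ v) i = (∑ k, A i k) * v i - ∑ k, A i k * v k := by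
  rw [laplacian, sub_mulVec, Pi.sub_apply, mulVec_diagonal]
  simp [mulVec, dotProduct]

theorem laplacian_mulVec_one (A : Matrix ι ι R) : A.laplacian *ᵥ 1 = 0 := by
  ext i
  simp [laplacian_mulVec_apply]

theorem laplacian_mulVec_single_one (A : Matrix ι ι R) (j : ι) :
    A.laplacian *ᵥ Pi.single j 1 = (A *ᵥ 1) j • Pi.single j 1 - A.col j := by
  rw [laplacian, sub_mulVec, diagonal_mulVec_single, mulVec_single_one, ← Pi.single_smul',
    smul_eq_mul]

end Matrix

theorem Fin.sum_univ_cast_val (n : ℕ) : ∑ k : Fin n, (k : ℝ) = n * (n - 1) / 2 := by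
  rw [Fin.sum_univ_eq_sum_range (fun k => (k : ℝ))]
  induction n with
  | zero => simp
  | succ n ih => rw [sum_range_succ, ih]; push_cast; ring

noncomputable def proximityMatrix (n : ℕ) : Matrix (Fin n) (Fin n) ℝ :=
  of fun i j => n - |(i : ℝ) - j|

def endpointIndicator (n : ℕ) : Fin (n + 1) → ℝ := Pi.single 0 1 + Pi.single (Fin.last n) 1

section

variable {n : ℕ}

theorem proximityMatrix_transpose : (proximityMatrix n)ᵀ = proximityMatrix n := by
  ext i j
  simp [proximityMatrix, abs_sub_comm]

theorem proximityMatrix_apply_zero (i : Fin (n + 1)) :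
    proximityMatrix (n + 1) i 0 = n + 1 - i := by
  simp [proximityMatrix]

theorem proximityMatrix_apply_last (i : Fin (n + 1)) :
    proximityMatrix (n + 1) i (Fin.last n) = i + 1 := by
  have hi : (i : ℝ) ≤ n := by exact_mod_cast Fin.is_le i
  simp [proximityMatrix, abs_of_nonpos (sub_nonpos.2 hi)]
  ring

theorem proximityMatrix_col_zero_add_col_last :
    (proximityMatrix (n + 1)).col 0 + (proximityMatrix (n + 1)).col (Fin.last n) =
      (n + 2 : ℝ) • 1 := by
  ext i
  simp only [Pi.add_apply, col_apply, proximityMatrix_apply_zero, proximityMatrix_apply_last,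
    Pi.smul_apply, Pi.one_apply, smul_eq_mul]
  ring

theorem proximityMatrix_mulVec_one_zero :
    (proximityMatrix (n + 1) *ᵥ 1) 0 = (n + 1) * (n + 2) / 2 := by
  rw [← proximityMatrix_transpose]
  simp only [mulVec, dotProduct, Pi.one_apply, mul_one, transpose_apply,
    proximityMatrix_apply_zero, sum_sub_distrib, Fin.sum_univ_cast_val, sum_const, card_univ,
    Fintype.card_fin, nsmul_eq_mul]
  push_cast
  ring

theorem proximityMatrix_mulVec_one_last :
    (proximityMatrix (n + 1) *ᵥ 1) (Fin.last n) = (n + 1) * (n + 2) / 2 := by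
  rw [← proximityMatrix_transpose]
  simp only [mulVec, dotProduct, Pi.one_apply, mul_one, transpose_apply,
    proximityMatrix_apply_last, sum_add_distrib, Fin.sum_univ_cast_val, sum_const, card_univ,
    Fintype.card_fin, nsmul_eq_mul]
  push_cast
  ring

theorem endpointIndicator_apply (hn : n ≠ 0) (k : Fin (n + 1)) :
    endpointIndicator n k = if (k : ℕ) = 0 ∨ (k : ℕ) = n then 1 else 0 := by
  have h0 : (0 : Fin (n + 1)) ≠ Fin.last n := by simp [Fin.ext_iff, Ne.symm hn]
  by_cases hk0 : k = 0
  · subst hk0; simp [endpointIndicator, h0]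
  by_cases hkl : k = Fin.last n
  · subst hkl; simp [endpointIndicator, h0.symm]
  · have hkn : (k : ℕ) ≠ n := fun h => hkl (Fin.ext h)
    simp [endpointIndicator, hk0, hkl, hkn]

theorem laplacian_proximityMatrix_mulVec_endpointIndicator :
    (proximityMatrix (n + 1)).laplacian *ᵥ endpointIndicator n =
      ((n + 1) * (n + 2) / 2 : ℝ) • endpointIndicator n - (n + 2 : ℝ) • 1 := by
  rw [endpointIndicator, mulVec_add, laplacian_mulVec_single_one, laplacian_mulVec_single_one,
    proximityMatrix_mulVec_one_zero, proximityMatrix_mulVec_one_last, smul_add,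
    ← proximityMatrix_col_zero_add_col_last]
  abel

theorem laplacian_proximityMatrix_mulVec_eigen {α β : ℝ} (hsum : 2 * α = (n - 1) * β) :
    (proximityMatrix (n + 1)).laplacian *ᵥ ((α + β) • endpointIndicator n - β • 1) =
      ((n + 1) * (n + 2) / 2 : ℝ) • ((α + β) • endpointIndicator n - β • 1) := by
  rw [mulVec_sub, mulVec_smul, mulVec_smul, laplacian_mulVec_one,
    laplacian_proximityMatrix_mulVec_endpointIndicator]
  ext i
  simp only [Pi.sub_apply, Pi.smul_apply, Pi.zero_apply, Pi.one_apply, smul_eq_mul]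
  linear_combination (-(n + 2) / 2 : ℝ) * hsum

end

theorem third_eigenvector_general (n : ℕ) (hn : 3 ≤ n) (S : Fin n → Fin n → ℝ)
    (hS : ∀ i j : Fin n, S i j = (n : ℝ) - |(i : ℝ) - (j : ℝ)|)
    (d : Fin n → ℝ) (hd : ∀ i : Fin n, d i = ∑ k : Fin n, S i k)
    (α β : ℝ)
    (hsum : 2 * α = ((n : ℝ) - 2) * β)
    (v : Fin n → ℝ)
    (hv : ∀ i : Fin n, v i = if (i : ℕ) = 0 ∨ (i : ℕ) = n - 1 then α else -β) :
    ∀ i : Fin n, d i * v i - ∑ k : Fin n, S i k * v k =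
      ((n : ℝ) * ((n : ℝ) + 1) / 2) * v i := by
  obtain ⟨m, rfl⟩ : ∃ m, n = m + 1 := ⟨n - 1, by omega⟩
  have hS' : S = proximityMatrix (m + 1) := by ext i j; exact hS i j
  have hv' : v = (α + β) • endpointIndicator m - β • 1 := by
    ext k
    rw [hv, Nat.add_sub_cancel, Pi.sub_apply, Pi.smul_apply, Pi.smul_apply,
      endpointIndicator_apply (by omega)]
    split_ifs <;> simp
  have hsum' : 2 * α = (m - 1) * β := by push_cast at hsum; linarith
  intro i
  subst hS' hv'
  rw [hd i, ← laplacian_mulVec_apply, laplacian_proximityMatrix_mulVec_eigen hsum',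
    Pi.smul_apply, smul_eq_mul]
  push_cast
  ring

/-- For the unnormalized Laplacian `L = diag(S𝟙) - S` of
`S i j = n - |i - j|`, the vector with value `α` on the endpoints and `-β`
in the middle (zero sum, unit norm) is an eigenvector with eigenvalue
`n(n+1)/2`. -/
theorem third_eigenvector (n : ℕ) (hn : 3 ≤ n) (S : Fin n → Fin n → ℝ)
    (hS : ∀ i j : Fin n, S i j = (n : ℝ) - |(i : ℝ) - (j : ℝ)|)
    (d : Fin n → ℝ) (hd : ∀ i : Fin n, d i = ∑ k : Fin n, S i k)
    (α β : ℝ) (hα : 0 < α) (hβ : 0 < β)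
    (hsum : 2 * α = ((n : ℝ) - 2) * β)
    (hnorm : 2 * α ^ 2 + ((n : ℝ) - 2) * β ^ 2 = 1)
    (v : Fin n → ℝ)
    (hv : ∀ i : Fin n, v i = if (i : ℕ) = 0 ∨ (i : ℕ) = n - 1 then α else -β) :
    ∀ i : Fin n, d i * v i - ∑ k : Fin n, S i k * v k =
      ((n : ℝ) * ((n : ℝ) + 1) / 2) * v i :=
  third_eigenvector_general n hn S hS d hd α β hsum v hv
end

section
/- Let S be the n×n matrix S_{i,j} = n - |i-j|, L = diag(S𝟙) - S, and let λ₂ be the smallest nonzero eigenvalue of L (the Fiedler value, i.e. the minimum of yᵀLy over unit vectors y orthogonal to 𝟙). Then λ₂ ≤ (2/5)(n² + 1). -/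
/-!
Test the Rayleigh quotient on the centered index vector `x i = i - (n - 1) / 2`. For a symmetric
weight `S` with Laplacian `L`, `2 xᵀ L x = ∑ᵢⱼ S i j (x i - x j)²`, and here `x i - x j = i - j`,
so `xᵀ L x = ½ ∑ᵢⱼ (n - |i - j|) (i - j)² = (n⁵ - n) / 30`, while `‖x‖² = n (n² - 1) / 12`.
The quotient is `2 (n² + 1) / 5`.
-/

open Finset

theorem sum_range_cubic (a b c e : ℝ) (n : ℕ) :
    ∑ j ∈ range n, (a + b * j + c * j ^ 2 + e * j ^ 3) =
      a * n + b * (n * (n - 1) / 2) + c * (n * (n - 1) * (2 * n - 1) / 6)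
        + e * (n * (n - 1) / 2) ^ 2 := by
  induction n with
  | zero => simp
  | succ m ih => rw [sum_range_succ, ih]; push_cast; ring

theorem sum_range_sum_range_succ {M : Type*} [AddCommMonoid M] (f : ℕ → ℕ → M) (n : ℕ) :
    ∑ i ∈ range (n + 1), ∑ j ∈ range (n + 1), f i j =
      ∑ i ∈ range n, ∑ j ∈ range n, f i j + ∑ j ∈ range n, (f n j + f j n) + f n n := by
  simp only [sum_range_succ, sum_add_distrib]
  abel

-- The weight `c` is kept free so that the induction on `m` does not change it.
theorem sum_range_sum_range_sub_abs_mul_sq (c : ℝ) (m : ℕ) :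
    ∑ i ∈ range m, ∑ j ∈ range m, (c - |(i : ℝ) - j|) * ((i : ℝ) - j) ^ 2 =
      c * m ^ 2 * (m ^ 2 - 1) / 6 - m * (m - 1) * (3 * m ^ 3 + 3 * m ^ 2 - 2 * m - 2) / 30 := by
  induction m with
  | zero => simp
  | succ m ih =>
    have hrow : ∀ j ∈ range m,
        (c - |(m : ℝ) - j|) * ((m : ℝ) - j) ^ 2 + (c - |(j : ℝ) - m|) * ((j : ℝ) - m) ^ 2 =
          2 * c * m ^ 2 - 2 * m ^ 3 + (-4 * c * m + 6 * m ^ 2) * j + (2 * c - 6 * m) * j ^ 2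
            + 2 * j ^ 3 := by
      intro j hj
      have hjm : (j : ℝ) ≤ m := by exact_mod_cast (mem_range.mp hj).le
      rw [abs_sub_comm (j : ℝ), abs_of_nonneg (sub_nonneg.mpr hjm)]
      ring
    rw [sum_range_sum_range_succ, ih, sum_congr rfl hrow, sum_range_cubic]
    push_cast
    ring

theorem two_mul_laplacian_quadForm {ι R : Type*} [Fintype ι] [DecidableEq ι] [CommRing R]
    (S : ι → ι → R) (hS : ∀ i j, S i j = S j i) (d : ι → R) (hd : ∀ i, d i = ∑ k, S i k)
    (L : ι → ι → R) (hL : ∀ i j, L i j = (if i = j then d i else 0) - S i j) (y : ι → R) :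
    2 * ∑ i, ∑ j, y i * L i j * y j = ∑ i, ∑ j, S i j * (y i - y j) ^ 2 := by
  have hdeg : ∑ i, ∑ j, S i j * y i ^ 2 = ∑ i, d i * y i ^ 2 := by
    simp only [hd, sum_mul]
  have hdeg' : ∑ i, ∑ j, S i j * y j ^ 2 = ∑ i, d i * y i ^ 2 := by
    rw [sum_comm, ← hdeg]
    simp only [hS]
  have hquad : ∑ i, ∑ j, y i * L i j * y j =
      ∑ i, d i * y i ^ 2 - ∑ i, ∑ j, S i j * (y i * y j) := by
    simp only [hL, sub_mul, mul_sub, ite_mul, mul_ite, zero_mul, mul_zero, sum_sub_distrib,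
      sum_ite_eq, mem_univ, if_true]
    congr 1
    · exact sum_congr rfl fun i _ => by ring
    · exact sum_congr rfl fun i _ => sum_congr rfl fun j _ => by ring
  have hexpand : ∀ i j, S i j * (y i - y j) ^ 2 =
      S i j * y i ^ 2 + S i j * y j ^ 2 - 2 * (S i j * (y i * y j)) := by
    intro i j; ring
  simp only [hexpand, sum_add_distrib, sum_sub_distrib, ← mul_sum, hdeg, hdeg', hquad]
  ring

noncomputable def centeredIndex (n : ℕ) (i : Fin n) : ℝ := i - (n - 1) / 2

theorem sum_centeredIndex (n : ℕ) : ∑ i, centeredIndex n i = 0 := by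
  calc ∑ i, centeredIndex n i
      = ∑ k ∈ range n, (-((n - 1) / 2) + 1 * (k : ℝ) + 0 * k ^ 2 + 0 * k ^ 3) :=
        (Fin.sum_univ_eq_sum_range (fun k : ℕ => (k : ℝ) - (n - 1) / 2) n).trans
          (sum_congr rfl fun k _ => by ring)
    _ = 0 := by rw [sum_range_cubic]; ring

theorem sum_centeredIndex_sq (n : ℕ) : ∑ i, centeredIndex n i ^ 2 = n * (n ^ 2 - 1) / 12 := by
  calc ∑ i, centeredIndex n i ^ 2
      = ∑ k ∈ range n, (((n - 1) / 2) ^ 2 + (-(n - 1)) * (k : ℝ) + 1 * k ^ 2 + 0 * k ^ 3) :=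
        (Fin.sum_univ_eq_sum_range (fun k : ℕ => ((k : ℝ) - (n - 1) / 2) ^ 2) n).trans
          (sum_congr rfl fun k _ => by ring)
    _ = n * (n ^ 2 - 1) / 12 := by rw [sum_range_cubic]; ring

theorem sum_sum_sub_abs_mul_sq_fin (n : ℕ) :
    ∑ i : Fin n, ∑ j : Fin n, ((n : ℝ) - |(i : ℝ) - j|) * ((i : ℝ) - j) ^ 2 = (n ^ 5 - n) / 15 := by
  rw [Fin.sum_univ_eq_sum_range
      (fun i : ℕ => ∑ j : Fin n, ((n : ℝ) - |(i : ℝ) - j|) * ((i : ℝ) - j) ^ 2),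
    sum_congr rfl fun (i : ℕ) _ =>
    Fin.sum_univ_eq_sum_range (fun j : ℕ => ((n : ℝ) - |(i : ℝ) - j|) * ((i : ℝ) - j) ^ 2) n,
    sum_range_sum_range_sub_abs_mul_sq]
  ring

-- Also holds for unbounded `s`, where `sInf s = 0`.
theorem Real.sInf_le_of_mem_of_nonneg {s : Set ℝ} {a : ℝ} (ha : a ∈ s) (h0 : 0 ≤ a) :
    sInf s ≤ a := by
  by_cases hs : BddBelow s
  · exact csInf_le hs ha
  · rwa [Real.sInf_of_not_bddBelow hs]

theorem exists_normalized_centeredIndex_quadForm_eq (n : ℕ) (hn : 2 ≤ n)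
    (S : Fin n → Fin n → ℝ) (hS : ∀ i j : Fin n, S i j = (n : ℝ) - |(i : ℝ) - (j : ℝ)|)
    (d : Fin n → ℝ) (hd : ∀ i : Fin n, d i = ∑ k : Fin n, S i k)
    (L : Fin n → Fin n → ℝ)
    (hL : ∀ i j : Fin n, L i j = (if i = j then d i else 0) - S i j) :
    ∃ y : Fin n → ℝ, (∑ i, y i = 0) ∧ (∑ i, y i ^ 2 = 1) ∧
      ∑ i, ∑ j, y i * L i j * y j = (2 / 5) * ((n : ℝ) ^ 2 + 1) := by
  have hn' : (2 : ℝ) ≤ n := by exact_mod_cast hn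
  have hn2 : (0 : ℝ) < n ^ 2 - 1 := by nlinarith
  set v : ℝ := n * (n ^ 2 - 1) / 12
  have hv : 0 < v := by positivity
  have hsqrt : √v ^ 2 = v := Real.sq_sqrt hv.le
  have hratio : ((n : ℝ) ^ 5 - n) / 15 / v = 2 * ((2 / 5) * ((n : ℝ) ^ 2 + 1)) := by
    field_simp
    ring
  have hSsymm : ∀ i j, S i j = S j i := fun i j => by rw [hS, hS, abs_sub_comm]
  refine ⟨fun i => centeredIndex n i / √v, ?_, ?_, ?_⟩
  · rw [← sum_div, sum_centeredIndex, zero_div]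
  · simp only [div_pow, ← sum_div, sum_centeredIndex_sq, hsqrt]
    exact div_self hv.ne'
  · have hdiff : ∀ i j : Fin n, S i j * (centeredIndex n i / √v - centeredIndex n j / √v) ^ 2 =
        ((n : ℝ) - |(i : ℝ) - j|) * ((i : ℝ) - j) ^ 2 / v := by
      intro i j
      rw [div_sub_div_same, div_pow, hsqrt, hS, centeredIndex, centeredIndex]
      ring
    have h2 := two_mul_laplacian_quadForm S hSsymm d hd L hL (fun i => centeredIndex n i / √v)
    simp only [hdiff, ← sum_div, sum_sum_sub_abs_mul_sq_fin, hratio] at h2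
    linarith

/-- The Fiedler value of the unnormalized Laplacian of
`S i j = n - |i - j|`, i.e. the infimum of the quadratic form over unit vectors
orthogonal to 𝟙, is at most `(2/5)(n² + 1)`. -/
theorem fiedler_value_upper_bound (n : ℕ) (S : Fin n → Fin n → ℝ)
    (hS : ∀ i j : Fin n, S i j = (n : ℝ) - |(i : ℝ) - (j : ℝ)|)
    (d : Fin n → ℝ) (hd : ∀ i : Fin n, d i = ∑ k : Fin n, S i k)
    (L : Fin n → Fin n → ℝ)
    (hL : ∀ i j : Fin n, L i j = (if i = j then d i else 0) - S i j) :
    sInf {q : ℝ | ∃ y : Fin n → ℝ, (∑ i : Fin n, y i = 0) ∧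
        (∑ i : Fin n, (y i) ^ 2 = 1) ∧ q = ∑ i : Fin n, ∑ j : Fin n, y i * L i j * y j}
      ≤ (2 / 5) * ((n : ℝ) ^ 2 + 1) := by
  rcases lt_or_ge n 2 with hn | hn
  · refine (Real.sInf_nonpos ?_).trans (by positivity)
    rintro q ⟨y, hy0, hy1, -⟩
    interval_cases n
    · simp at hy1
    · simp_all
  · obtain ⟨y, hy0, hy1, hq⟩ := exists_normalized_centeredIndex_quadForm_eq n hn S hS d hd L hL
    exact Real.sInf_le_of_mem_of_nonneg ⟨y, hy0, hy1, hq.symm⟩ (by positivity)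
end

section
/- Let f, f̃ ∈ ℝⁿ with f strictly increasing (the true Fiedler vector, identity ranking) and suppose ‖f̃ - f‖_∞ ≤ |f_j - f_i|/2 for a pair i < j. Then f̃_j ≥ f̃_i. Consequently, if π̃ is the ranking obtained by sorting f̃ and π the identity ranking, then for every i₀, |π̃_{i₀} - π_{i₀}| ≤ 2·#{j : |f_j - f_{i₀}| < 2‖f̃ - f‖_∞}. -/
/-!
If every coordinate moves by at most `M`, two values of `f` that are at least `2M` apart keep
their order. Hence every index `j` inverted with `i₀` satisfies `|f j - f i₀| < 2M`, and each of
the two inversion counts is at most the number of such `j`.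
-/

open scoped Classical

section Perturbation

variable {ι α : Type*} [Field α] [LinearOrder α] [IsStrictOrderedRing α]
  {f g : ι → α} {M : α} {i j : ι}

theorem le_of_two_mul_le_sub_of_abs_sub_le (hi : |g i - f i| ≤ M) (hj : |g j - f j| ≤ M)
    (hgap : 2 * M ≤ f j - f i) : g i ≤ g j := by
  linarith [(abs_le.1 hi).2, (abs_le.1 hj).1]

theorem abs_sub_lt_of_inversion (hi : |g i - f i| ≤ M) (hj : |g j - f j| ≤ M)
    (hf : f i ≤ f j) (hg : g j < g i) : |f j - f i| < 2 * M := by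
  rw [abs_of_nonneg (sub_nonneg.2 hf)]
  by_contra! hgap
  exact hg.not_ge (le_of_two_mul_le_sub_of_abs_sub_le hi hj hgap)

end Perturbation

/-- If `f` is strictly increasing and `‖f̃ - f‖_∞ ≤ |f j - f i|/2`
for a pair `i < j`, then `f̃ j ≥ f̃ i`. Consequently the displacement of the
ranking obtained by sorting `f̃` satisfies
`|π̃ i₀ - π i₀| ≤ 2 · #{j : |f j - f i₀| < 2‖f̃ - f‖_∞}`. -/
theorem ranking_displacement_bound (n : ℕ) (f ftil : Fin n → ℝ)
    (hf : StrictMono f) :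
    (∀ i j : Fin n, i < j →
      (∀ k : Fin n, |ftil k - f k| ≤ |f j - f i| / 2) → ftil i ≤ ftil j) ∧
    (∀ M : ℝ, (∀ k : Fin n, |ftil k - f k| ≤ M) →
      ∀ i₀ : Fin n,
        ((Finset.univ.filter fun j : Fin n => j < i₀ ∧ ftil i₀ < ftil j).card +
          (Finset.univ.filter fun j : Fin n => i₀ < j ∧ ftil j < ftil i₀).card : ℕ)
          ≤ 2 * (Finset.univ.filter fun j : Fin n => |f j - f i₀| < 2 * M).card) := by
  refine ⟨fun i j hij hM => le_of_two_mul_le_sub_of_abs_sub_le (hM i) (hM j) ?_, ?_⟩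
  · rw [mul_div_cancel₀ _ two_ne_zero, abs_of_pos (sub_pos.2 (hf hij))]
  intro M hM i₀
  have below : (Finset.univ.filter fun j : Fin n => j < i₀ ∧ ftil i₀ < ftil j).card ≤
      (Finset.univ.filter fun j : Fin n => |f j - f i₀| < 2 * M).card :=
    Finset.card_le_card <| Finset.monotone_filter_right _ fun j _ ⟨hj, hinv⟩ => by
      simpa only [abs_sub_comm] using
        abs_sub_lt_of_inversion (hM j) (hM i₀) (hf hj).le hinv
  have above : (Finset.univ.filter fun j : Fin n => i₀ < j ∧ ftil j < ftil i₀).card ≤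
      (Finset.univ.filter fun j : Fin n => |f j - f i₀| < 2 * M).card :=
    Finset.card_le_card <| Finset.monotone_filter_right _ fun j _ ⟨hj, hinv⟩ =>
      abs_sub_lt_of_inversion (hM i₀) (hM j) (hf hj).le hinv
  omega
end

section
/- In the generalized linear model with distinct skill parameters ν₁ > ν₂ > … > ν_n, the limit similarity matrix S with S_{i,j} = Σ_{k=1}^n (1 - |P_{i,k} - P_{j,k}|), where P_{i,j} = H(ν_i - ν_j), satisfies the strict Robinson inequalities: S_{i+1,j} < S_{i,j} and S_{i,j-1} < S_{i,j} for all i > j. -/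
/-! Each column `k ↦ P i k` is strictly decreasing in the row index `i`, since `H` is increasing
and `ν` decreasing. Hence, along a column, moving a row further away from row `j` strictly
increases `|P i k - P j k|`, and summing over the (nonempty) set of columns gives the strict
inequalities. -/

open Finset

def rowSimilarity {ι κ : Type*} [Fintype κ] (P : ι → κ → ℝ) (i j : ι) : ℝ :=
  ∑ k, (1 - |P i k - P j k|)

section Robinson

variable {ι κ : Type*} [Preorder ι] [Fintype κ] [Nonempty κ] {P : ι → κ → ℝ}

theorem rowSimilarity_lt_of_lt_of_lt_left (hP : ∀ k, StrictAnti fun i => P i k)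
    {i i' j : ι} (hji : j < i) (hii' : i < i') :
    rowSimilarity P i' j < rowSimilarity P i j := by
  refine sum_lt_sum_of_nonempty univ_nonempty fun k _ => ?_
  have h₁ := hP k hji
  have h₂ := hP k hii'
  rw [abs_of_neg (by linarith), abs_of_neg (by linarith)]
  linarith

theorem rowSimilarity_lt_of_lt_of_lt_right (hP : ∀ k, StrictAnti fun i => P i k)
    {i j j' : ι} (hj'j : j' < j) (hji : j < i) :
    rowSimilarity P i j' < rowSimilarity P i j := by
  refine sum_lt_sum_of_nonempty univ_nonempty fun k _ => ?_
  have h₁ := hP k hj'j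
  have h₂ := hP k hji
  rw [abs_of_neg (by linarith), abs_of_neg (by linarith)]
  linarith

end Robinson

theorem glm_similarity_strictR_general (n : ℕ) (H : ℝ → ℝ)
    (hH : StrictMono H)
    (ν : Fin n → ℝ) (hν : StrictAnti ν)
    (P : Fin n → Fin n → ℝ) (hP : ∀ i j : Fin n, P i j = H (ν i - ν j))
    (S : Fin n → Fin n → ℝ)
    (hS : ∀ i j : Fin n, S i j = ∑ k : Fin n, (1 - |P i k - P j k|)) :
    ∀ i j : Fin n, j < i →
      (∀ ip : Fin n, (ip : ℕ) = (i : ℕ) + 1 → S ip j < S i j) ∧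
      (∀ jm : Fin n, (jm : ℕ) + 1 = (j : ℕ) → S i jm < S i j) := by
  obtain rfl : S = rowSimilarity P := funext₂ hS
  have hcol : ∀ k, StrictAnti fun i => P i k := fun k a b hab => by
    simp only [hP]
    exact hH (by linarith [hν hab])
  intro i j hji
  have : Nonempty (Fin n) := ⟨i⟩
  refine ⟨fun ip hip => ?_, fun jm hjm => ?_⟩
  · exact rowSimilarity_lt_of_lt_of_lt_left hcol hji (Fin.lt_def.mpr (by omega))
  · exact rowSimilarity_lt_of_lt_of_lt_right hcol (Fin.lt_def.mpr (by omega)) hji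

/-- In the generalized linear model with strictly decreasing
skill parameters, the limit similarity matrix
`S i j = ∑ k (1 - |P i k - P j k|)` with `P i j = H (ν i - ν j)` satisfies the
strict Robinson inequalities `S (i+1) j < S i j` and `S i (j-1) < S i j` for
`i > j`. -/
theorem glm_similarity_strictR (n : ℕ) (H : ℝ → ℝ)
    (hH : StrictMono H) (hH01 : ∀ x : ℝ, 0 ≤ H x ∧ H x ≤ 1)
    (hHsym : ∀ x : ℝ, H (-x) = 1 - H x)
    (ν : Fin n → ℝ) (hν : StrictAnti ν)
    (P : Fin n → Fin n → ℝ) (hP : ∀ i j : Fin n, P i j = H (ν i - ν j))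
    (S : Fin n → Fin n → ℝ)
    (hS : ∀ i j : Fin n, S i j = ∑ k : Fin n, (1 - |P i k - P j k|)) :
    ∀ i j : Fin n, j < i →
      (∀ ip : Fin n, (ip : ℕ) = (i : ℕ) + 1 → S ip j < S i j) ∧
      (∀ jm : Fin n, (jm : ℕ) + 1 = (j : ℕ) → S i jm < S i j) :=
  glm_similarity_strictR_general n H hH ν hν P hP S hS
end
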